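/- arXiv:1704.01354 — 3 statements merged into one kernel-verified Lean document; each statement's English description precedes it below -/
import Mathlib

section
/- Let μ₁ and μ₂ be Borel probability measures on Σ, let 0 < α ≤ 1 and suppose κ := κ_α(M,μ₁) < 1. Then for every n ∈ ℕ and every φ ∈ H_α(X): ‖L_{M,μ₁}^n φ − L_{M,μ₂}^n φ‖_∞ ≤ (‖μ₁ − μ₂‖_TV/(1−κ)) · v_α(φ), where ‖μ₁ − μ₂‖_TV denotes the total variation norm of the signed measure μ₁ − μ₂. -/
open MeasureTheory ENNReal

/-! The difference of the iterates telescopes: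
`L₁^{m+1} φ - L₂^{m+1} φ = (L₁ - L₂) (L₁^m φ) + L₂ (L₁^m φ - L₂^m φ)`.
Since `L₂` does not increase the sup norm, it suffices to bound the first term. The operator `L₁`
multiplies an `α`-Hölder constant by at most `κ`, so `L₁^m φ` has oscillation at most
`κ^m c diam(X)^α`, and integrating a function of oscillation `B` against `μ₁ - μ₂` costs at most
`B ‖μ₁ - μ₂‖` (shift it to take values in `[0, B]` and split along a Hahn decomposition).
Summing the geometric series in `κ` gives the bound. -/

/-- The `α`-Hölder seminorm `v_α(φ) = diam(X)^α ⬝ sup_{x ≠ y} |φ x - φ y| / d(x,y)^α`,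
valued in `ℝ≥0∞`. -/
noncomputable def eHolderSemi {X : Type*} [PseudoMetricSpace X] (α : ℝ) (φ : X → ℝ) : ℝ≥0∞ :=
  (EMetric.diam (Set.univ : Set X)) ^ α *
    ⨆ pq : { pq : X × X // pq.1 ≠ pq.2 },
      ENNReal.ofReal (|φ pq.val.1 - φ pq.val.2| / dist pq.val.1 pq.val.2 ^ α)

/-- The Markov (transfer) operator `(L_{M,μ} φ)(p) = ∫_Σ φ(M(x,p)) dμ(x)`. -/
noncomputable def transferOp {S X : Type*} [MeasurableSpace S] (μ : Measure S)
    (M : S × X → X) (φ : X → ℝ) : X → ℝ :=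
  fun p => ∫ x, φ (M (x, p)) ∂μ

/-- `κ_α(M,μ) = sup_{p ≠ q} ∫_Σ (d(M(x,p),M(x,q))/d(p,q))^α dμ(x)`. -/
noncomputable def kappaAlpha {S X : Type*} [MeasurableSpace S] [PseudoMetricSpace X]
    (μ : Measure S) (α : ℝ) (M : S × X → X) : ℝ≥0∞ :=
  ⨆ pq : { pq : X × X // pq.1 ≠ pq.2 },
    ∫⁻ x, ENNReal.ofReal
      ((dist (M (x, pq.val.1)) (M (x, pq.val.2)) / dist pq.val.1 pq.val.2) ^ α) ∂μ

/-- The total variation norm `‖μ₁ − μ₂‖` of the difference of two finite measures. -/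
noncomputable def tvNorm {S : Type*} [MeasurableSpace S]
    (μ₁ μ₂ : Measure S) [IsFiniteMeasure μ₁] [IsFiniteMeasure μ₂] : ℝ≥0∞ :=
  (μ₁.toSignedMeasure - μ₂.toSignedMeasure).totalVariation Set.univ

section TotalVariation

variable {S : Type*} [MeasurableSpace S]

lemma MeasureTheory.SignedMeasure.abs_apply_le_totalVariation (ν : SignedMeasure S) {A : Set S}
    (hA : MeasurableSet A) : |ν A| ≤ (ν.totalVariation Set.univ).toReal := by
  set J := ν.toJordanDecomposition
  have hνA : ν A = J.posPart.real A - J.negPart.real A := by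
    conv_lhs => rw [← ν.toSignedMeasure_toJordanDecomposition]
    rw [JordanDecomposition.toSignedMeasure, sub_apply,
      Measure.toSignedMeasure_apply_measurable hA, Measure.toSignedMeasure_apply_measurable hA]
  have hpos : J.posPart.real A ≤ J.posPart.real Set.univ := measureReal_mono (Set.subset_univ A)
  have hneg : J.negPart.real A ≤ J.negPart.real Set.univ := measureReal_mono (Set.subset_univ A)
  rw [hνA, SignedMeasure.totalVariation, Measure.add_apply,
    ENNReal.toReal_add (measure_ne_top _ _) (measure_ne_top _ _), ← measureReal_def,
    ← measureReal_def, abs_le]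
  constructor <;> linarith [measureReal_nonneg (μ := J.posPart) (s := A),
    measureReal_nonneg (μ := J.negPart) (s := A)]

section FiniteMeasures

variable (μ₁ μ₂ : Measure S) [IsFiniteMeasure μ₁] [IsFiniteMeasure μ₂]

lemma tvNorm_ne_top : tvNorm μ₁ μ₂ ≠ ⊤ := by
  rw [tvNorm, SignedMeasure.totalVariation, Measure.add_apply]
  exact ENNReal.add_ne_top.2 ⟨measure_ne_top _ _, measure_ne_top _ _⟩

lemma tvNorm_comm : tvNorm μ₂ μ₁ = tvNorm μ₁ μ₂ := by
  rw [tvNorm, tvNorm, ← SignedMeasure.totalVariation_neg, neg_sub]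

lemma abs_measureReal_sub_le_tvNorm {A : Set S} (hA : MeasurableSet A) :
    |μ₁.real A - μ₂.real A| ≤ (tvNorm μ₁ μ₂).toReal := by
  have := (μ₁.toSignedMeasure - μ₂.toSignedMeasure).abs_apply_le_totalVariation hA
  rwa [sub_apply, Measure.toSignedMeasure_apply_measurable hA,
    Measure.toSignedMeasure_apply_measurable hA] at this

end FiniteMeasures

lemma integral_sub_integral_le_of_measure_le {ν ν' : Measure S} [IsFiniteMeasure ν'] (hνν' : ν ≤ ν')
    {h : S → ℝ} (hi : Integrable h ν') {B : ℝ} (hB : ∀ x, h x ≤ B) :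
    ∫ x, h x ∂ν' - ∫ x, h x ∂ν ≤ B * (ν'.real Set.univ - ν.real Set.univ) := by
  have hconst : Integrable (fun _ => B) ν' := integrable_const B
  have := integral_mono_measure hνν' (ae_of_all _ fun x => sub_nonneg.2 (hB x)) (hconst.sub hi)
  rw [integral_sub hconst hi, integral_sub (hconst.mono_measure hνν') (hi.mono_measure hνν'),
    integral_const, integral_const, smul_eq_mul, smul_eq_mul] at this
  linarith

lemma integral_sub_integral_le_tvNorm {μ₁ μ₂ : Measure S} [IsFiniteMeasure μ₁]
    [IsFiniteMeasure μ₂] {h : S → ℝ} (h₁ : Integrable h μ₁) (h₂ : Integrable h μ₂)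
    (h0 : ∀ x, 0 ≤ h x) {B : ℝ} (hB : ∀ x, h x ≤ B) :
    ∫ x, h x ∂μ₁ - ∫ x, h x ∂μ₂ ≤ B * (tvNorm μ₁ μ₂).toReal := by
  rcases isEmpty_or_nonempty S with hS | ⟨⟨x₀⟩⟩
  · simp [Measure.eq_zero_of_isEmpty μ₁, Measure.eq_zero_of_isEmpty μ₂, tvNorm,
      SignedMeasure.totalVariation_zero]
  obtain ⟨s, hs, hs_ge, hsc_le⟩ := hahn_decomposition μ₁ μ₂
  have hB0 : 0 ≤ B := (h0 x₀).trans (hB x₀)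
  have on_s : μ₂.restrict s ≤ μ₁.restrict s := Measure.le_iff.2 fun t ht => by
    rw [Measure.restrict_apply ht, Measure.restrict_apply ht]
    exact hs_ge _ (ht.inter hs) Set.inter_subset_right
  have on_sc : μ₁.restrict sᶜ ≤ μ₂.restrict sᶜ := Measure.le_iff.2 fun t ht => by
    rw [Measure.restrict_apply ht, Measure.restrict_apply ht]
    exact hsc_le _ (ht.inter hs.compl) Set.inter_subset_right
  have diff_s := integral_sub_integral_le_of_measure_le on_s h₁.restrict hB
  have diff_sc := integral_mono_measure on_sc (ae_of_all _ h0) h₂.restrict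
  rw [measureReal_restrict_apply_univ, measureReal_restrict_apply_univ] at diff_s
  rw [← integral_add_compl hs h₁, ← integral_add_compl hs h₂]
  calc _ ≤ B * (μ₁.real s - μ₂.real s) := by linarith
    _ ≤ B * (tvNorm μ₁ μ₂).toReal :=
      mul_le_mul_of_nonneg_left
        ((le_abs_self _).trans (abs_measureReal_sub_le_tvNorm μ₁ μ₂ hs)) hB0

lemma abs_integral_sub_integral_le_tvNorm_of_abs_sub_le {μ₁ μ₂ : Measure S}
    [IsProbabilityMeasure μ₁] [IsProbabilityMeasure μ₂] {g : S → ℝ} (h₁ : Integrable g μ₁)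
    (h₂ : Integrable g μ₂) {B : ℝ} (hB : ∀ x y, |g x - g y| ≤ B) :
    |∫ x, g x ∂μ₁ - ∫ x, g x ∂μ₂| ≤ B * (tvNorm μ₁ μ₂).toReal := by
  have : Nonempty S := nonempty_of_isProbabilityMeasure μ₁
  have hbdd : BddBelow (Set.range g) := ⟨g (Classical.arbitrary S) - B, by
    rintro _ ⟨x, rfl⟩; linarith [(abs_le.1 (hB (Classical.arbitrary S) x)).2]⟩
  set a := ⨅ x, g x
  have shift_nonneg : ∀ x, 0 ≤ g x - a := fun x => sub_nonneg.2 (ciInf_le hbdd x)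
  have shift_le : ∀ x, g x - a ≤ B := fun x => by
    have : g x - B ≤ a := le_ciInf fun y => by linarith [(abs_le.1 (hB x y)).2]
    linarith
  have shift : ∀ (μ : Measure S) [IsProbabilityMeasure μ], Integrable g μ →
      ∫ x, (g x - a) ∂μ = ∫ x, g x ∂μ - a := fun μ _ hg => by
    simp [integral_sub hg (integrable_const a)]
  have upper := integral_sub_integral_le_tvNorm (h := fun x => g x - a)
    (h₁.sub (integrable_const a)) (h₂.sub (integrable_const a)) shift_nonneg shift_le
  have lower := integral_sub_integral_le_tvNorm (h := fun x => g x - a)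
    (h₂.sub (integrable_const a)) (h₁.sub (integrable_const a)) shift_nonneg shift_le
  rw [shift μ₁ h₁, shift μ₂ h₂] at upper lower
  rw [tvNorm_comm] at lower
  rw [abs_sub_le_iff]
  constructor <;> linarith

end TotalVariation

lemma abs_transferOp_le {S X : Type*} [MeasurableSpace S] (μ : Measure S)
    [IsProbabilityMeasure μ] (M : S × X → X) {ψ : X → ℝ} {B : ℝ} (hB : ∀ q, |ψ q| ≤ B) (p : X) :
    |transferOp μ M ψ p| ≤ B := by
  simpa [transferOp] using norm_integral_le_of_norm_le_const (f := fun x => ψ (M (x, p)))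
    (ae_of_all μ fun x => hB (M (x, p)))

section TransferOperator

variable {S X : Type*} [TopologicalSpace S] [CompactSpace S] [MeasurableSpace S]
  [OpensMeasurableSpace S] [MetricSpace X] {M : S × X → X}

lemma integrable_comp_mk_right (μ : Measure S) [IsFiniteMeasure μ] (hM : Continuous M)
    {ψ : X → ℝ} (hψ : Continuous ψ) (p : X) : Integrable (fun x => ψ (M (x, p))) μ :=
  (hψ.comp (hM.comp (Continuous.prodMk_left p))).integrable_of_hasCompactSupport
    (.of_compactSpace _)

lemma continuous_transferOp [CompactSpace X] (μ : Measure S) [IsFiniteMeasure μ]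
    (hM : Continuous M) {ψ : X → ℝ} (hψ : Continuous ψ) : Continuous (transferOp μ M ψ) := by
  obtain ⟨C, hC⟩ := hψ.norm.bddAbove_range_of_hasCompactSupport (.of_compactSpace _)
  exact continuous_of_dominated
    (fun p => (integrable_comp_mk_right μ hM hψ p).aestronglyMeasurable)
    (fun p => ae_of_all _ fun x => hC ⟨M (x, p), rfl⟩) (integrable_const C)
    (ae_of_all _ fun x => hψ.comp (hM.comp (Continuous.prodMk_right x)))

lemma transferOp_sub_transferOp (μ : Measure S) [IsFiniteMeasure μ] (hM : Continuous M)
    {ψ₁ ψ₂ : X → ℝ} (hψ₁ : Continuous ψ₁) (hψ₂ : Continuous ψ₂) (p : X) :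
    transferOp μ M ψ₁ p - transferOp μ M ψ₂ p = transferOp μ M (ψ₁ - ψ₂) p :=
  (integral_sub (integrable_comp_mk_right μ hM hψ₁ p) (integrable_comp_mk_right μ hM hψ₂ p)).symm

lemma integrable_rpow_dist_div (μ : Measure S) [IsFiniteMeasure μ] (hM : Continuous M)
    {α : ℝ} (hα : 0 ≤ α) (p q : X) :
    Integrable (fun x => (dist (M (x, p)) (M (x, q)) / dist p q) ^ α) μ :=
  ((((hM.comp (Continuous.prodMk_left p)).dist (hM.comp (Continuous.prodMk_left q))).div_const
      _).rpow_const fun _ => Or.inr hα).integrable_of_hasCompactSupport (.of_compactSpace _)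

lemma integral_rpow_dist_div_le_kappaAlpha (μ : Measure S) [IsFiniteMeasure μ]
    (hM : Continuous M) {α : ℝ} (hα : 0 ≤ α) (hκ : kappaAlpha μ α M ≠ ⊤) {p q : X}
    (hpq : p ≠ q) :
    ∫ x, (dist (M (x, p)) (M (x, q)) / dist p q) ^ α ∂μ ≤ (kappaAlpha μ α M).toReal := by
  rw [integral_eq_lintegral_of_nonneg_ae (ae_of_all _ fun x => by positivity)
    (integrable_rpow_dist_div μ hM hα p q).aestronglyMeasurable]
  exact ENNReal.toReal_mono hκ (le_iSup_of_le ⟨(p, q), hpq⟩ le_rfl)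

lemma abs_transferOp_sub_transferOp_le (μ : Measure S) [IsFiniteMeasure μ] (hM : Continuous M)
    {α : ℝ} (hα : 0 < α) (hκ : kappaAlpha μ α M ≠ ⊤) {ψ : X → ℝ} (hψ : Continuous ψ) {c : ℝ}
    (hc : 0 ≤ c) (hH : ∀ p q, |ψ p - ψ q| ≤ c * dist p q ^ α) (p q : X) :
    |transferOp μ M ψ p - transferOp μ M ψ q| ≤
      (kappaAlpha μ α M).toReal * c * dist p q ^ α := by
  rcases eq_or_ne p q with rfl | hpq
  · simp [Real.zero_rpow hα.ne']
  have hd : 0 < dist p q := dist_pos.2 hpq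
  have pointwise : ∀ x, |ψ (M (x, p)) - ψ (M (x, q))| ≤
      c * dist p q ^ α * (dist (M (x, p)) (M (x, q)) / dist p q) ^ α := fun x => by
    rw [Real.div_rpow dist_nonneg hd.le, mul_assoc, mul_div_cancel₀ _ (by positivity)]
    exact hH _ _
  calc |transferOp μ M ψ p - transferOp μ M ψ q|
      = |∫ x, (ψ (M (x, p)) - ψ (M (x, q))) ∂μ| := by
        rw [transferOp, transferOp, integral_sub (integrable_comp_mk_right μ hM hψ p)
          (integrable_comp_mk_right μ hM hψ q)]
    _ ≤ ∫ x, |ψ (M (x, p)) - ψ (M (x, q))| ∂μ := abs_integral_le_integral_abs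
    _ ≤ ∫ x, c * dist p q ^ α * (dist (M (x, p)) (M (x, q)) / dist p q) ^ α ∂μ :=
        integral_mono_of_nonneg (ae_of_all _ fun _ => abs_nonneg _)
          ((integrable_rpow_dist_div μ hM hα.le p q).const_mul _) (ae_of_all _ pointwise)
    _ = c * dist p q ^ α * ∫ x, (dist (M (x, p)) (M (x, q)) / dist p q) ^ α ∂μ :=
        integral_const_mul _ _
    _ ≤ c * dist p q ^ α * (kappaAlpha μ α M).toReal := by
        gcongr
        exact integral_rpow_dist_div_le_kappaAlpha μ hM hα.le hκ hpq
    _ = (kappaAlpha μ α M).toReal * c * dist p q ^ α := by ring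

variable [CompactSpace X]

lemma continuous_iterate_transferOp (μ : Measure S) [IsFiniteMeasure μ] (hM : Continuous M)
    {φ : X → ℝ} (hφ : Continuous φ) (n : ℕ) : Continuous ((transferOp μ M)^[n] φ) := by
  induction n with
  | zero => exact hφ
  | succ n ih => rw [Function.iterate_succ_apply']; exact continuous_transferOp μ hM ih

lemma abs_iterate_transferOp_sub_le (μ : Measure S) [IsFiniteMeasure μ] (hM : Continuous M)
    {α : ℝ} (hα : 0 < α) (hκ : kappaAlpha μ α M ≠ ⊤) {φ : X → ℝ} (hφ : Continuous φ) {c : ℝ}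
    (hc : 0 ≤ c) (hH : ∀ p q, |φ p - φ q| ≤ c * dist p q ^ α) (n : ℕ) (p q : X) :
    |(transferOp μ M)^[n] φ p - (transferOp μ M)^[n] φ q| ≤
      (kappaAlpha μ α M).toReal ^ n * c * dist p q ^ α := by
  induction n generalizing p q with
  | zero => simpa using hH p q
  | succ n ih =>
    simp only [Function.iterate_succ_apply']
    rw [pow_succ', mul_assoc _ _ c]
    exact abs_transferOp_sub_transferOp_le μ hM hα hκ (continuous_iterate_transferOp μ hM hφ n)
      (by positivity) ih p q

lemma abs_iterate_transferOp_sub_iterate_le {μ₁ μ₂ : Measure S} [IsProbabilityMeasure μ₁]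
    [IsProbabilityMeasure μ₂] (hM : Continuous M) {α : ℝ} (hα : 0 < α)
    (hκ : kappaAlpha μ₁ α M ≠ ⊤) {φ : X → ℝ} (hφ : Continuous φ) {c : ℝ} (hc : 0 ≤ c)
    (hH : ∀ p q, |φ p - φ q| ≤ c * dist p q ^ α) (n : ℕ) (p : X) :
    |(transferOp μ₁ M)^[n] φ p - (transferOp μ₂ M)^[n] φ p| ≤
      (tvNorm μ₁ μ₂).toReal * (c * Metric.diam (Set.univ : Set X) ^ α) *
        ∑ k ∈ Finset.range n, (kappaAlpha μ₁ α M).toReal ^ k := by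
  induction n generalizing p with
  | zero => simp
  | succ n ih =>
    set κ := (kappaAlpha μ₁ α M).toReal
    set T := (tvNorm μ₁ μ₂).toReal
    set D := Metric.diam (Set.univ : Set X)
    set ψ₁ := (transferOp μ₁ M)^[n] φ
    set ψ₂ := (transferOp μ₂ M)^[n] φ
    have hψ₁ : Continuous ψ₁ := continuous_iterate_transferOp μ₁ hM hφ n
    have hψ₂ : Continuous ψ₂ := continuous_iterate_transferOp μ₂ hM hφ n
    have oscillation : ∀ x y, |ψ₁ (M (x, p)) - ψ₁ (M (y, p))| ≤ κ ^ n * c * D ^ α := fun x y =>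
      (abs_iterate_transferOp_sub_le μ₁ hM hα hκ hφ hc hH n _ _).trans <| by
        gcongr
        exact Metric.dist_le_diam_of_mem isCompact_univ.isBounded trivial trivial
    have change_measure : |transferOp μ₁ M ψ₁ p - transferOp μ₂ M ψ₁ p| ≤ κ ^ n * c * D ^ α * T :=
      abs_integral_sub_integral_le_tvNorm_of_abs_sub_le (integrable_comp_mk_right μ₁ hM hψ₁ p)
        (integrable_comp_mk_right μ₂ hM hψ₁ p) oscillation
    have change_function :
        |transferOp μ₂ M ψ₁ p - transferOp μ₂ M ψ₂ p| ≤
          T * (c * D ^ α) * ∑ k ∈ Finset.range n, κ ^ k := by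
      rw [transferOp_sub_transferOp μ₂ hM hψ₁ hψ₂]
      exact abs_transferOp_le μ₂ M ih p
    simp only [Function.iterate_succ_apply']
    rw [Finset.sum_range_succ]
    calc _ ≤ |transferOp μ₁ M ψ₁ p - transferOp μ₂ M ψ₁ p| +
          |transferOp μ₂ M ψ₁ p - transferOp μ₂ M ψ₂ p| := abs_sub_le _ _ _
      _ ≤ _ := add_le_add change_measure change_function
      _ = _ := by ring

end TransferOperator

lemma exists_abs_sub_le_of_eHolderSemi_ne_top {X : Type*} [MetricSpace X] [BoundedSpace X]
    {α : ℝ} (hα : 0 < α) {φ : X → ℝ} (hφ : eHolderSemi α φ ≠ ⊤) :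
    ∃ c, 0 ≤ c ∧ (∀ p q, |φ p - φ q| ≤ c * dist p q ^ α) ∧
      ENNReal.ofReal (c * Metric.diam (Set.univ : Set X) ^ α) = eHolderSemi α φ := by
  set K := ⨆ pq : { pq : X × X // pq.1 ≠ pq.2 },
    ENNReal.ofReal (|φ pq.val.1 - φ pq.val.2| / dist pq.val.1 pq.val.2 ^ α)
  have hdiam : Metric.ediam (Set.univ : Set X) ≠ ⊤ := (Bornology.isBounded_univ.2 ‹_›).ediam_ne_top
  -- `ediam^α * K < ⊤` forces `K < ⊤` unless `X` is a subsingleton, where `K` is an empty supremum.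
  have hK : K ≠ ⊤ := by
    intro hK
    have hsub : (Set.univ : Set X).Subsingleton := by
      rw [← Metric.ediam_eq_zero_iff]
      by_contra h0
      exact hφ (ENNReal.mul_eq_top.2
        (Or.inl ⟨(ENNReal.rpow_pos (pos_iff_ne_zero.2 h0) hdiam).ne', hK⟩))
    have : IsEmpty { pq : X × X // pq.1 ≠ pq.2 } := ⟨fun pq => pq.2 (hsub trivial trivial)⟩
    simp [K] at hK
  refine ⟨K.toReal, ENNReal.toReal_nonneg, fun p q => ?_, ?_⟩
  · rcases eq_or_ne p q with rfl | hpq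
    · simp [Real.zero_rpow hα.ne']
    have hd : 0 < dist p q ^ α := Real.rpow_pos_of_pos (dist_pos.2 hpq) α
    rw [← div_le_iff₀ hd, ← ENNReal.ofReal_le_iff_le_toReal hK]
    exact le_iSup_of_le ⟨(p, q), hpq⟩ le_rfl
  · rw [ENNReal.ofReal_mul ENNReal.toReal_nonneg, ENNReal.ofReal_toReal hK, Metric.diam,
      ENNReal.toReal_rpow, ENNReal.ofReal_toReal (ENNReal.rpow_ne_top_of_nonneg hα.le hdiam),
      eHolderSemi, mul_comm]
    rfl

theorem stmt9_general {S X : Type*} [MetricSpace S] [CompactSpace S]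
    [MeasurableSpace S] [BorelSpace S] [MetricSpace X] [CompactSpace X]
    (μ₁ μ₂ : Measure S) [IsProbabilityMeasure μ₁] [IsProbabilityMeasure μ₂]
    (M : S × X → X) (hM : Continuous M)
    (α : ℝ) (hα0 : 0 < α)
    (hκ : kappaAlpha μ₁ α M < 1)
    (n : ℕ) (φ : X → ℝ) (hφc : Continuous φ) (hφ : eHolderSemi α φ < ⊤) :
    ∀ p : X, ENNReal.ofReal
        |(transferOp μ₁ M)^[n] φ p - (transferOp μ₂ M)^[n] φ p| ≤
      (tvNorm μ₁ μ₂ / (1 - kappaAlpha μ₁ α M)) * eHolderSemi α φ := by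
  intro p
  obtain ⟨c, hc, hH, hcv⟩ := exists_abs_sub_le_of_eHolderSemi_ne_top hα0 hφ.ne
  set κ := kappaAlpha μ₁ α M
  have hκtop : κ ≠ ⊤ := hκ.ne_top
  have hκ1 : κ.toReal < 1 := ENNReal.toReal_lt_of_lt_ofReal (by simpa using hκ)
  have geom : ∑ k ∈ Finset.range n, κ.toReal ^ k ≤ 1 / (1 - κ.toReal) := by
    simpa using geom_sum_Ico_le_of_lt_one (m := 0) (n := n) ENNReal.toReal_nonneg hκ1
  calc ENNReal.ofReal |(transferOp μ₁ M)^[n] φ p - (transferOp μ₂ M)^[n] φ p|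
      ≤ ENNReal.ofReal ((tvNorm μ₁ μ₂).toReal * (c * Metric.diam (Set.univ : Set X) ^ α) *
          (1 / (1 - κ.toReal))) := by
        gcongr
        exact (abs_iterate_transferOp_sub_iterate_le hM hα0 hκtop hφc hc hH n p).trans
          (by gcongr)
    _ = (tvNorm μ₁ μ₂ / (1 - κ)) * eHolderSemi α φ := by
        rw [ENNReal.ofReal_mul (by positivity), ENNReal.ofReal_mul ENNReal.toReal_nonneg, hcv,
          ENNReal.ofReal_toReal (tvNorm_ne_top μ₁ μ₂), ENNReal.ofReal_div_of_pos (by linarith),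
          ENNReal.ofReal_sub _ ENNReal.toReal_nonneg, ENNReal.ofReal_toReal hκtop]
        simp [div_eq_mul_inv, mul_right_comm]

/-- If `κ := κ_α(M,μ₁) < 1` then for all `n` and all `φ ∈ H_α(X)`,
`‖L_{M,μ₁}^n φ − L_{M,μ₂}^n φ‖_∞ ≤ (‖μ₁ − μ₂‖_TV/(1−κ)) · v_α(φ)`. -/
theorem stmt9 {S X : Type*} [MetricSpace S] [CompactSpace S]
    [MeasurableSpace S] [BorelSpace S] [MetricSpace X] [CompactSpace X]
    (μ₁ μ₂ : Measure S) [IsProbabilityMeasure μ₁] [IsProbabilityMeasure μ₂]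
    (M : S × X → X) (hM : Continuous M)
    (α : ℝ) (hα0 : 0 < α) (hα1 : α ≤ 1)
    (hκ : kappaAlpha μ₁ α M < 1)
    (n : ℕ) (φ : X → ℝ) (hφc : Continuous φ) (hφ : eHolderSemi α φ < ⊤) :
    ∀ p : X, ENNReal.ofReal
        |(transferOp μ₁ M)^[n] φ p - (transferOp μ₂ M)^[n] φ p| ≤
      (tvNorm μ₁ μ₂ / (1 - kappaAlpha μ₁ α M)) * eHolderSemi α φ :=
  stmt9_general μ₁ μ₂ M hM α hα0 hκ n φ hφc hφ
end

section
/- Let A_1,…,A_k ∈ SL(2,ℝ) act linearly on the Euclidean plane ℝ², let p_1,…,p_k ≥ 0 with Σ p_j = 1, let 0 < α < 1 and v ≥ 0. Suppose φ : ℝ²∖{0} → ℝ satisfies φ(λu) = φ(u) for all λ ≠ 0 and all nonzero u, and |φ(u) − φ(w)| ≤ v·δ(u,w)^α for all nonzero u,w. Then for all unit vectors x, y ∈ ℝ² with ‖x∧y‖ ≠ 0: |Σ_{j=1}^k p_j φ(A_j x) − Σ_{j=1}^k p_j φ(A_j y)| ≤ (1/2)·(Σ_{j=1}^k p_j ‖A_j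 x‖^{−2α} + Σ_{j=1}^k p_j ‖A_j y‖^{−2α}) · v · δ(x,y)^α. -/
open scoped RealInnerProductSpace

/-- `‖u ∧ w‖ = sqrt(‖u‖²‖w‖² − ⟨u,w⟫²)`, the area of the parallelogram spanned by `u, w`. -/
noncomputable def wedgeNorm (u w : EuclideanSpace ℝ (Fin 2)) : ℝ :=
  Real.sqrt (‖u‖ ^ 2 * ‖w‖ ^ 2 - ⟪u, w⟫ ^ 2)

/-- The projective distance `δ(x,y) = ‖x ∧ y‖/(‖x‖·‖y‖)` between nonzero vectors. -/
noncomputable def projDist (x y : EuclideanSpace ℝ (Fin 2)) : ℝ :=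
  wedgeNorm x y / (‖x‖ * ‖y‖)

/-- The linear action of a matrix in `SL(2,ℝ)` on the Euclidean plane. -/
noncomputable def slAct (M : Matrix.SpecialLinearGroup (Fin 2) ℝ)
    (x : EuclideanSpace ℝ (Fin 2)) : EuclideanSpace ℝ (Fin 2) :=
  Matrix.toEuclideanLin (M : Matrix (Fin 2) (Fin 2) ℝ) x

/-! A matrix of determinant one preserves the area form, so for unit vectors `x, y`
`δ(Ax, Ay) = δ(x, y) · ‖Ax‖⁻¹ ‖Ay‖⁻¹`. Raising to the power `α` and applying AM-GM to
`‖Ax‖^{-α} ‖Ay‖^{-α}` bounds each term `|φ(Ax) − φ(Ay)|`; averaging with the weights `p_j`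
gives the estimate. -/

lemma inner_fin_two (u w : EuclideanSpace ℝ (Fin 2)) :
    ⟪u, w⟫ = u 0 * w 0 + u 1 * w 1 := by
  simp [EuclideanSpace.inner_eq_star_dotProduct, dotProduct, Fin.sum_univ_two, mul_comm]

lemma norm_sq_fin_two (u : EuclideanSpace ℝ (Fin 2)) :
    ‖u‖ ^ 2 = u 0 ^ 2 + u 1 ^ 2 := by
  rw [← real_inner_self_eq_norm_sq, inner_fin_two]; ring

lemma wedgeNorm_eq_abs (u w : EuclideanSpace ℝ (Fin 2)) :
    wedgeNorm u w = |u 0 * w 1 - u 1 * w 0| := by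
  rw [wedgeNorm, inner_fin_two, norm_sq_fin_two, norm_sq_fin_two, ← Real.sqrt_sq_eq_abs]
  ring_nf

lemma wedgeNorm_comm (u w : EuclideanSpace ℝ (Fin 2)) : wedgeNorm u w = wedgeNorm w u := by
  rw [wedgeNorm_eq_abs, wedgeNorm_eq_abs, abs_sub_comm]
  ring_nf

lemma slAct_apply (M : Matrix.SpecialLinearGroup (Fin 2) ℝ) (x : EuclideanSpace ℝ (Fin 2))
    (i : Fin 2) : slAct M x i = M i 0 * x 0 + M i 1 * x 1 := by
  fin_cases i <;> simp [slAct]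

lemma wedgeNorm_slAct (M : Matrix.SpecialLinearGroup (Fin 2) ℝ)
    (x y : EuclideanSpace ℝ (Fin 2)) :
    wedgeNorm (slAct M x) (slAct M y) = wedgeNorm x y := by
  have hdet : M 0 0 * M 1 1 - M 0 1 * M 1 0 = 1 := by
    rw [← Matrix.det_fin_two]; exact M.2
  simp only [wedgeNorm_eq_abs, slAct_apply]
  congr 1
  linear_combination (x 0 * y 1 - x 1 * y 0) * hdet

lemma slAct_ne_zero_of_wedgeNorm_ne_zero (M : Matrix.SpecialLinearGroup (Fin 2) ℝ)
    {x y : EuclideanSpace ℝ (Fin 2)} (h : wedgeNorm x y ≠ 0) : slAct M x ≠ 0 := by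
  intro hx
  apply h
  rw [← wedgeNorm_slAct M, wedgeNorm_eq_abs, hx]
  simp

lemma projDist_of_norm_eq_one {x y : EuclideanSpace ℝ (Fin 2)} (hx : ‖x‖ = 1) (hy : ‖y‖ = 1) :
    projDist x y = wedgeNorm x y := by
  simp [projDist, hx, hy]

lemma projDist_slAct (M : Matrix.SpecialLinearGroup (Fin 2) ℝ)
    {x y : EuclideanSpace ℝ (Fin 2)} (hx : ‖x‖ = 1) (hy : ‖y‖ = 1) :
    projDist (slAct M x) (slAct M y) = projDist x y / (‖slAct M x‖ * ‖slAct M y‖) := by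
  rw [projDist, wedgeNorm_slAct, projDist_of_norm_eq_one hx hy]

lemma rpow_neg_mul_rpow_neg_le {a b : ℝ} (ha : 0 ≤ a) (hb : 0 ≤ b) (α : ℝ) :
    a ^ (-α) * b ^ (-α) ≤ 1 / 2 * (a ^ (-(2 * α)) + b ^ (-(2 * α))) := by
  have hsq : ∀ {c : ℝ}, 0 ≤ c → c ^ (-(2 * α)) = (c ^ (-α)) ^ 2 := fun hc => by
    rw [← Real.rpow_mul_natCast hc]; ring_nf
  rw [hsq ha, hsq hb]
  linarith [two_mul_le_add_sq (a ^ (-α)) (b ^ (-α))]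

lemma abs_sub_le_of_holder_slAct (M : Matrix.SpecialLinearGroup (Fin 2) ℝ) {α v : ℝ}
    (hv : 0 ≤ v) {φ : EuclideanSpace ℝ (Fin 2) → ℝ}
    (hφ : ∀ u w : EuclideanSpace ℝ (Fin 2), u ≠ 0 → w ≠ 0 → |φ u - φ w| ≤ v * projDist u w ^ α)
    {x y : EuclideanSpace ℝ (Fin 2)} (hx : ‖x‖ = 1) (hy : ‖y‖ = 1) (hxy : wedgeNorm x y ≠ 0) :
    |φ (slAct M x) - φ (slAct M y)| ≤
      1 / 2 * (‖slAct M x‖ ^ (-(2 * α)) + ‖slAct M y‖ ^ (-(2 * α))) * v * projDist x y ^ α := by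
  have hMx := slAct_ne_zero_of_wedgeNorm_ne_zero M hxy
  have hMy := slAct_ne_zero_of_wedgeNorm_ne_zero M (wedgeNorm_comm x y ▸ hxy)
  have hδ : 0 ≤ projDist x y := by rw [projDist_of_norm_eq_one hx hy]; exact Real.sqrt_nonneg _
  have hpow : projDist (slAct M x) (slAct M y) ^ α =
      projDist x y ^ α * (‖slAct M x‖ ^ (-α) * ‖slAct M y‖ ^ (-α)) := by
    rw [projDist_slAct M hx hy, Real.div_rpow hδ (by positivity),
      Real.mul_rpow (norm_nonneg _) (norm_nonneg _), Real.rpow_neg (norm_nonneg _),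
      Real.rpow_neg (norm_nonneg _), div_eq_mul_inv, mul_inv]
  calc |φ (slAct M x) - φ (slAct M y)|
      ≤ v * projDist (slAct M x) (slAct M y) ^ α := hφ _ _ hMx hMy
    _ = v * projDist x y ^ α * (‖slAct M x‖ ^ (-α) * ‖slAct M y‖ ^ (-α)) := by
      rw [hpow]; ring
    _ ≤ v * projDist x y ^ α * (1 / 2 * (‖slAct M x‖ ^ (-(2 * α)) + ‖slAct M y‖ ^ (-(2 * α)))) :=
      mul_le_mul_of_nonneg_left (rpow_neg_mul_rpow_neg_le (norm_nonneg _) (norm_nonneg _) α)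
        (by positivity)
    _ = _ := by ring

lemma abs_sum_mul_sub_sum_mul_le {ι : Type*} (s : Finset ι) {p f g c : ι → ℝ}
    (hp : ∀ j, 0 ≤ p j) (h : ∀ j, |f j - g j| ≤ c j) :
    |∑ j ∈ s, p j * f j - ∑ j ∈ s, p j * g j| ≤ ∑ j ∈ s, p j * c j := by
  rw [← Finset.sum_sub_distrib]
  refine (Finset.abs_sum_le_sum_abs _ _).trans (Finset.sum_le_sum fun j _ => ?_)
  rw [← mul_sub, abs_mul, abs_of_nonneg (hp j)]
  exact mul_le_mul_of_nonneg_left (h j) (hp j)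

theorem stmt18_general {k : ℕ} (A : Fin k → Matrix.SpecialLinearGroup (Fin 2) ℝ)
    (p : Fin k → ℝ) (hp : ∀ j, 0 ≤ p j)
    (α : ℝ) (v : ℝ) (hv : 0 ≤ v)
    (φ : EuclideanSpace ℝ (Fin 2) → ℝ)
    (hφhold : ∀ u w : EuclideanSpace ℝ (Fin 2), u ≠ 0 → w ≠ 0 →
      |φ u - φ w| ≤ v * projDist u w ^ α) :
    ∀ x y : EuclideanSpace ℝ (Fin 2), ‖x‖ = 1 → ‖y‖ = 1 → wedgeNorm x y ≠ 0 →
      |(∑ j : Fin k, p j * φ (slAct (A j) x)) - ∑ j : Fin k, p j * φ (slAct (A j) y)| ≤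
        (1 / 2) * ((∑ j : Fin k, p j * ‖slAct (A j) x‖ ^ (-(2 * α))) +
            ∑ j : Fin k, p j * ‖slAct (A j) y‖ ^ (-(2 * α))) *
          v * projDist x y ^ α := by
  intro x y hx hy hxy
  calc _ ≤ ∑ j : Fin k, p j * (1 / 2 * (‖slAct (A j) x‖ ^ (-(2 * α)) +
          ‖slAct (A j) y‖ ^ (-(2 * α))) * v * projDist x y ^ α) :=
        abs_sum_mul_sub_sum_mul_le _ hp fun j =>
          abs_sub_le_of_holder_slAct (A j) hv hφhold hx hy hxy
    _ = _ := by
        rw [← Finset.sum_add_distrib, Finset.mul_sum, Finset.sum_mul, Finset.sum_mul]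
        exact Finset.sum_congr rfl fun j _ => by ring

/-- Hölder contraction bound for the transfer operator of an `SL(2,ℝ)` random cocycle:
for a projective `α`-Hölder observable `φ` with constant `v`, and unit vectors `x, y` with
`‖x∧y‖ ≠ 0`,
`|Σ_j p_j φ(A_j x) − Σ_j p_j φ(A_j y)| ≤ ½(Σ_j p_j ‖A_j x‖^{−2α} + Σ_j p_j ‖A_j y‖^{−2α}) · v · δ(x,y)^α`. -/
theorem stmt18 {k : ℕ} (A : Fin k → Matrix.SpecialLinearGroup (Fin 2) ℝ)
    (p : Fin k → ℝ) (hp : ∀ j, 0 ≤ p j) (hpsum : ∑ j : Fin k, p j = 1)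
    (α : ℝ) (hα0 : 0 < α) (hα1 : α < 1) (v : ℝ) (hv : 0 ≤ v)
    (φ : EuclideanSpace ℝ (Fin 2) → ℝ)
    (hφproj : ∀ (c : ℝ) (u : EuclideanSpace ℝ (Fin 2)), c ≠ 0 → u ≠ 0 → φ (c • u) = φ u)
    (hφhold : ∀ u w : EuclideanSpace ℝ (Fin 2), u ≠ 0 → w ≠ 0 →
      |φ u - φ w| ≤ v * projDist u w ^ α) :
    ∀ x y : EuclideanSpace ℝ (Fin 2), ‖x‖ = 1 → ‖y‖ = 1 → wedgeNorm x y ≠ 0 →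
      |(∑ j : Fin k, p j * φ (slAct (A j) x)) - ∑ j : Fin k, p j * φ (slAct (A j) y)| ≤
        (1 / 2) * ((∑ j : Fin k, p j * ‖slAct (A j) x‖ ^ (-(2 * α))) +
            ∑ j : Fin k, p j * ‖slAct (A j) y‖ ^ (-(2 * α))) *
          v * projDist x y ^ α :=
  stmt18_general A p hp α v hv φ hφhold
end

section
/- Let M_1,…,M_k ∈ SL(2,ℝ) act linearly on the Euclidean plane ℝ², let p_1,…,p_k ≥ 0 with Σ p_j = 1, let 0 < α < 1, and let x, v ∈ ℝ² be orthonormal vectors. Define H : ℝ → ℝ by H(t) := Σ_{j=1}^k p_j ‖M_j(cos t · x + sin t · v)‖^{−2α}. Then H is differentiable and |H′(t)| ≤ 2α · (max_{1≤j≤k} ‖M_j‖)^{2(1+α)} for every t ∈ ℝ, where ‖M_j‖ denotes the operator norm of M_j on ℝ². -/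
open scoped RealInnerProductSpace

/-- The operator norm (w.r.t. the Euclidean norm) of a matrix in `SL(2,ℝ)`. -/
noncomputable def slOpNorm (M : Matrix.SpecialLinearGroup (Fin 2) ℝ) : ℝ :=
  ‖LinearMap.toContinuousLinearMap (Matrix.toEuclideanLin (M : Matrix (Fin 2) (Fin 2) ℝ))‖

/-!
If `J` is the rotation by `π/2` and `ω` the area form of the plane, then for a unit vector `u` and
`M ∈ SL(2,ℝ)` we get `1 = ω(Mu, MJu) ≤ ‖Mu‖ ‖MJu‖ ≤ ‖M‖ ‖Mu‖`, i.e. `‖Mu‖⁻¹ ≤ ‖M‖`.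
Along the unit circle `c(t) = cos t • x + sin t • v` the derivative of `‖M c(t)‖^(-2α)` is
`-2α ‖Mc‖^(-2α-2) ⟪Mc, Mc'⟫`, which is at most `2α ‖Mc‖^(-2α-1) ‖M‖ ≤ 2α ‖M‖^(2α+2)` in absolute
value; `H′` is a convex combination of such derivatives.
-/

open Module

namespace Orientation
variable {E : Type*} [NormedAddCommGroup E] [InnerProductSpace ℝ E] [Fact (finrank ℝ E = 2)]
  (o : Orientation ℝ E (Fin 2))

theorem areaForm_comp_linearMap (f : E →ₗ[ℝ] E) (x y : E) :
    o.areaForm (f x) (f y) = LinearMap.det f * o.areaForm x y := by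
  let b := o.finOrthonormalBasis two_pos Fact.out
  have hb : b.toBasis.orientation = o := o.finOrthonormalBasis_orientation _ _
  have hfxy : ![f x, f y] = f ∘ ![x, y] := by
    ext i : 1
    fin_cases i <;> rfl
  rw [areaForm_to_volumeForm, areaForm_to_volumeForm, o.volumeForm_robust b hb, hfxy,
    Basis.det_comp]

end Orientation

section
variable {E : Type*} [NormedAddCommGroup E] [InnerProductSpace ℝ E]

theorem abs_det_mul_norm_le_opNorm_mul_norm_apply [Fact (finrank ℝ E = 2)] (f : E →L[ℝ] E)
    (u : E) :
    |LinearMap.det (f : E →ₗ[ℝ] E)| * ‖u‖ ≤ ‖f‖ * ‖f u‖ := by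
  have : FiniteDimensional ℝ E := .of_fact_finrank_eq_two
  let o : Orientation ℝ E (Fin 2) := (finBasisOfFinrankEq ℝ E Fact.out).orientation
  have key : |LinearMap.det (f : E →ₗ[ℝ] E)| * ‖u‖ * ‖u‖ ≤ ‖f‖ * ‖f u‖ * ‖u‖ :=
    calc |LinearMap.det (f : E →ₗ[ℝ] E)| * ‖u‖ * ‖u‖
        = |o.areaForm (f u) (f (o.rightAngleRotation u))| := by
          rw [← ContinuousLinearMap.coe_coe f, o.areaForm_comp_linearMap,
            o.areaForm_rightAngleRotation_right, real_inner_self_eq_norm_sq, abs_mul, abs_sq]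
          ring
      _ ≤ ‖f u‖ * ‖f (o.rightAngleRotation u)‖ := o.abs_areaForm_le _ _
      _ ≤ ‖f u‖ * (‖f‖ * ‖u‖) := by
          gcongr
          simpa using f.le_opNorm (o.rightAngleRotation u)
      _ = ‖f‖ * ‖f u‖ * ‖u‖ := by ring
  rcases (norm_nonneg u).eq_or_lt with hu | hu
  · rw [← hu, mul_zero]; positivity
  · exact le_of_mul_le_mul_right key hu

theorem HasDerivAt.norm_rpow {F : Type*} [NormedAddCommGroup F] [InnerProductSpace ℝ F]
    {g : ℝ → F} {g' : F} {t : ℝ} (hg : HasDerivAt g g' t) (h0 : g t ≠ 0) (r : ℝ) :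
    HasDerivAt (fun s => ‖g s‖ ^ r) (r * ‖g t‖ ^ (r - 2) * ⟪g t, g'⟫) t := by
  have hpos : 0 < ‖g t‖ := norm_pos_iff.mpr h0
  have hsq := hg.norm_sq.rpow_const (p := r / 2) (Or.inl (by positivity))
  convert hsq using 1
  · ext s
    rw [← Real.rpow_natCast, ← Real.rpow_mul (norm_nonneg _)]
    congr 1
    ring
  · rw [← Real.rpow_natCast, ← Real.rpow_mul hpos.le]
    ring_nf

theorem norm_smul_add_smul_of_inner_eq_zero {x v : E} (hx : ‖x‖ = 1) (hv : ‖v‖ = 1)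
    (hxv : ⟪x, v⟫ = 0) {a b : ℝ} (hab : a ^ 2 + b ^ 2 = 1) : ‖a • x + b • v‖ = 1 := by
  have hsq : ‖a • x + b • v‖ ^ 2 = 1 := by
    rw [norm_add_sq_real, real_inner_smul_left, real_inner_smul_right, hxv, norm_smul, norm_smul,
      hx, hv]
    simpa [sq_abs] using hab
  exact (pow_eq_one_iff_of_nonneg (norm_nonneg _) two_ne_zero).mp hsq

end

theorem norm_slAct_le (M : Matrix.SpecialLinearGroup (Fin 2) ℝ) (y : EuclideanSpace ℝ (Fin 2)) :
    ‖slAct M y‖ ≤ slOpNorm M * ‖y‖ :=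
  (LinearMap.toContinuousLinearMap
    (Matrix.toEuclideanLin (M : Matrix (Fin 2) (Fin 2) ℝ))).le_opNorm y

theorem norm_le_slOpNorm_mul_norm_slAct (M : Matrix.SpecialLinearGroup (Fin 2) ℝ)
    (u : EuclideanSpace ℝ (Fin 2)) : ‖u‖ ≤ slOpNorm M * ‖slAct M u‖ := by
  have : Fact (finrank ℝ (EuclideanSpace ℝ (Fin 2)) = 2) := ⟨finrank_euclideanSpace_fin⟩
  simpa [slOpNorm, slAct, LinearMap.det_toLpLin, M.det_coe] using
    abs_det_mul_norm_le_opNorm_mul_norm_apply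
      (LinearMap.toContinuousLinearMap (Matrix.toEuclideanLin (M : Matrix (Fin 2) (Fin 2) ℝ))) u

theorem exists_hasDerivAt_norm_slAct_rpow_abs_le (M : Matrix.SpecialLinearGroup (Fin 2) ℝ)
    {x v : EuclideanSpace ℝ (Fin 2)} (hx : ‖x‖ = 1) (hv : ‖v‖ = 1) (hxv : ⟪x, v⟫ = 0)
    {α : ℝ} (hα : 0 < α) (t : ℝ) :
    ∃ h' : ℝ,
      HasDerivAt (fun s => ‖slAct M (Real.cos s • x + Real.sin s • v)‖ ^ (-(2 * α))) h' t ∧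
        |h'| ≤ 2 * α * slOpNorm M ^ (2 * (1 + α)) := by
  set N := slOpNorm M
  set u := Real.cos t • x + Real.sin t • v
  set w := (-Real.sin t) • x + Real.cos t • v
  have hu : ‖u‖ = 1 := norm_smul_add_smul_of_inner_eq_zero hx hv hxv (Real.cos_sq_add_sin_sq t)
  have hw : ‖w‖ = 1 :=
    norm_smul_add_smul_of_inner_eq_zero hx hv hxv (by rw [neg_sq, Real.sin_sq_add_cos_sq])
  have hcurve : HasDerivAt (fun s => Real.cos s • x + Real.sin s • v) w t :=
    ((Real.hasDerivAt_cos t).smul_const x).add ((Real.hasDerivAt_sin t).smul_const v)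
  have hMcurve : HasDerivAt (fun s => slAct M (Real.cos s • x + Real.sin s • v)) (slAct M w) t :=
    (LinearMap.toContinuousLinearMap
      (Matrix.toEuclideanLin (M : Matrix (Fin 2) (Fin 2) ℝ))).hasFDerivAt.comp_hasDerivAt t hcurve
  have hMu : 1 ≤ N * ‖slAct M u‖ := hu ▸ norm_le_slOpNorm_mul_norm_slAct M u
  have hMu_pos : 0 < ‖slAct M u‖ := pos_of_mul_pos_right (one_pos.trans_le hMu) (norm_nonneg _)
  have hN_pos : 0 < N := pos_of_mul_pos_left (one_pos.trans_le hMu) (norm_nonneg _)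
  have hMu_inv : ‖slAct M u‖⁻¹ ≤ N := (inv_le_iff_one_le_mul₀ hMu_pos).mpr (by linarith)
  have hMw : ‖slAct M w‖ ≤ N := by simpa [hw] using norm_slAct_le M w
  refine ⟨_, hMcurve.norm_rpow (norm_pos_iff.mp hMu_pos) _, ?_⟩
  calc |-(2 * α) * ‖slAct M u‖ ^ (-(2 * α) - 2) * ⟪slAct M u, slAct M w⟫|
      ≤ 2 * α * ‖slAct M u‖ ^ (-(2 * α) - 2) * (‖slAct M u‖ * N) := by
        rw [abs_mul, abs_mul, abs_neg, abs_of_pos (by positivity),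
          abs_of_pos (Real.rpow_pos_of_pos hMu_pos _)]
        gcongr
        exact (abs_real_inner_le_norm _ _).trans (by gcongr)
    _ = 2 * α * (‖slAct M u‖⁻¹) ^ (2 * α + 1) * N := by
        rw [Real.inv_rpow hMu_pos.le, ← Real.rpow_neg hMu_pos.le,
          show -(2 * α + 1) = -(2 * α) - 2 + 1 by ring, Real.rpow_add_one hMu_pos.ne']
        ring
    _ ≤ 2 * α * N ^ (2 * α + 1) * N := by gcongr
    _ = 2 * α * N ^ (2 * (1 + α)) := by
        rw [mul_assoc, ← Real.rpow_add_one hN_pos.ne']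
        ring_nf

theorem stmt19_general {k : ℕ}
    (M : Fin k → Matrix.SpecialLinearGroup (Fin 2) ℝ)
    (p : Fin k → ℝ) (hp : ∀ j, 0 ≤ p j) (hpsum : ∑ j : Fin k, p j = 1)
    (α : ℝ) (hα0 : 0 < α)
    (x v : EuclideanSpace ℝ (Fin 2)) (hx : ‖x‖ = 1) (hv : ‖v‖ = 1) (hxv : ⟪x, v⟫ = 0)
    (H : ℝ → ℝ)
    (hH : H = fun t =>
      ∑ j : Fin k, p j * ‖slAct (M j) (Real.cos t • x + Real.sin t • v)‖ ^ (-(2 * α))) :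
    Differentiable ℝ H ∧
      ∀ t : ℝ, |deriv H t| ≤ 2 * α * (⨆ j : Fin k, slOpNorm (M j)) ^ (2 * (1 + α)) := by
  choose h' hasDerivAt_h' abs_h'_le using
    fun j => exists_hasDerivAt_norm_slAct_rpow_abs_le (M j) hx hv hxv hα0
  have hasDerivAt_H : ∀ t, HasDerivAt H (∑ j, p j * h' j t) t := fun t =>
    hH ▸ HasDerivAt.fun_sum fun j _ => (hasDerivAt_h' j t).const_mul (p j)
  refine ⟨fun t => (hasDerivAt_H t).differentiableAt, fun t => ?_⟩
  set S := ⨆ j : Fin k, slOpNorm (M j)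
  have hS : ∀ j, slOpNorm (M j) ≤ S := le_ciSup (Set.finite_range _).bddAbove
  rw [(hasDerivAt_H t).deriv]
  calc |∑ j, p j * h' j t| ≤ ∑ j, p j * |h' j t| := by
        simpa only [abs_mul, abs_of_nonneg (hp _)] using
          Finset.abs_sum_le_sum_abs (fun j => p j * h' j t) Finset.univ
    _ ≤ ∑ j, p j * (2 * α * S ^ (2 * (1 + α))) := by
        gcongr with j
        · exact hp j
        · refine (abs_h'_le j t).trans ?_
          gcongr
          · exact norm_nonneg _
          · exact hS j
    _ = 2 * α * S ^ (2 * (1 + α)) := by rw [← Finset.sum_mul, hpsum, one_mul]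

/-- The function `H(t) = Σ_j p_j ‖M_j(cos t · x + sin t · v)‖^{−2α}`, for orthonormal
`x, v`, is differentiable with `|H′(t)| ≤ 2α (max_j ‖M_j‖)^{2(1+α)}`. -/
theorem stmt19 {k : ℕ} (hk : 0 < k)
    (M : Fin k → Matrix.SpecialLinearGroup (Fin 2) ℝ)
    (p : Fin k → ℝ) (hp : ∀ j, 0 ≤ p j) (hpsum : ∑ j : Fin k, p j = 1)
    (α : ℝ) (hα0 : 0 < α) (hα1 : α < 1)
    (x v : EuclideanSpace ℝ (Fin 2)) (hx : ‖x‖ = 1) (hv : ‖v‖ = 1) (hxv : ⟪x, v⟫ = 0)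
    (H : ℝ → ℝ)
    (hH : H = fun t =>
      ∑ j : Fin k, p j * ‖slAct (M j) (Real.cos t • x + Real.sin t • v)‖ ^ (-(2 * α))) :
    Differentiable ℝ H ∧
      ∀ t : ℝ, |deriv H t| ≤ 2 * α * (⨆ j : Fin k, slOpNorm (M j)) ^ (2 * (1 + α)) :=
  stmt19_general M p hp hpsum α hα0 x v hx hv hxv H hH
end
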